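/- arXiv:1911.11551 — 3 statements merged into one kernel-verified Lean document; each statement's English description precedes it below -/
import Mathlib

section
/- On a finite connected directed graph G = (V,E), the unit ball of the dual norm to the graph BV-norm on the space P = {F ∈ S_V : ∑_v F(v) = 0} equals the image under div of the unit ball of ℓ∞(S_E); that is, {ψ ∈ P : sup_{‖grad h‖_{ℓ¹(S_E)} ≤ 1} ⟨ψ, h⟩ ≤ 1} = div({g ∈ S_E : max_e |g(e)| ≤ 1}). -/
/-- Gradient operator on a directed graph with edge source/target maps. -/
def grad {V E : Type*} (src tgt : E → V) (f : V → ℝ) : E → ℝ :=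
  fun e => f (tgt e) - f (src e)

/-- Divergence operator on a directed graph: incoming minus outgoing flow. -/
def gdiv {V E : Type*} [Fintype E] [DecidableEq V] (src tgt : E → V) (g : E → ℝ) : V → ℝ :=
  fun v => (∑ e : E, if tgt e = v then g e else 0) - (∑ e : E, if src e = v then g e else 0)

/-- Connectedness of the underlying undirected graph. -/
def GConnected {V E : Type*} (src tgt : E → V) : Prop :=
  ∀ v w : V, Relation.ReflTransGen
    (fun a b => ∃ e : E, (src e = a ∧ tgt e = b) ∨ (src e = b ∧ tgt e = a)) v w

/-!
The summation-by-parts identity `⟨div g, h⟩ = ⟨g, grad h⟩` shows that `div g` with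
`‖g‖_∞ ≤ 1` has mean zero and pairs with `h` to at most `‖grad h‖₁`. Conversely, on a connected graph `grad h = 0` forces `h` to be
constant, so a mean-zero `ψ` in the dual unit ball satisfies `⟨ψ, h⟩ ≤ ‖grad h‖₁` for all `h`
by homogeneity. If such a `ψ` were not in the compact convex set `div (ℓ∞-ball)`, a separating
functional `h` would give `⟨ψ, h⟩ > sup_g ⟨div g, h⟩ = ‖grad h‖₁`, the supremum being attained
at `g = sign (grad h)`.
-/

open Finset

lemma sum_sum_ite_mul {V E R : Type*} [Fintype V] [Fintype E] [DecidableEq V]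
    [NonUnitalNonAssocSemiring R] (f : E → V) (g : E → R) (h : V → R) :
    ∑ v, (∑ e, if f e = v then g e else 0) * h v = ∑ e, g e * h (f e) := by
  simp_rw [sum_mul, ite_mul, zero_mul]
  rw [sum_comm]
  simp

lemma sum_gdiv_mul {V E : Type*} [Fintype V] [Fintype E] [DecidableEq V]
    (src tgt : E → V) (g : E → ℝ) (h : V → ℝ) :
    ∑ v, gdiv src tgt g v * h v = ∑ e, g e * grad src tgt h e := by
  simp only [gdiv, grad, sub_mul, mul_sub, sum_sub_distrib, sum_sum_ite_mul]

lemma sum_gdiv {V E : Type*} [Fintype V] [Fintype E] [DecidableEq V]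
    (src tgt : E → V) (g : E → ℝ) : ∑ v, gdiv src tgt g v = 0 := by
  simpa [grad] using sum_gdiv_mul src tgt g 1

noncomputable def gdivₗ {V E : Type*} [Fintype E] [DecidableEq V] (src tgt : E → V) :
    (E → ℝ) →ₗ[ℝ] (V → ℝ) where
  toFun := gdiv src tgt
  map_add' g g' := by
    funext v
    simp only [gdiv, Pi.add_apply, ← sum_filter, sum_add_distrib]
    ring
  map_smul' c g := by
    funext v
    simp only [gdiv, Pi.smul_apply, smul_eq_mul, ← sum_filter, ← mul_sum, RingHom.id_apply]
    ring

lemma sum_mul_le_sum_abs {ι R : Type*} [Ring R] [LinearOrder R] [IsOrderedRing R]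
    (s : Finset ι) {g : ι → R} (hg : ∀ i, |g i| ≤ 1) (a : ι → R) : ∑ i ∈ s, g i * a i ≤ ∑ i ∈ s, |a i| :=
  sum_le_sum fun i _ => calc
    g i * a i ≤ |g i| * |a i| := abs_mul (g i) (a i) ▸ le_abs_self _
    _ ≤ |a i| := mul_le_of_le_one_left (abs_nonneg _) (hg i)

lemma abs_sign_le_one {R : Type*} [Ring R] [LinearOrder R] [IsOrderedRing R] (x : R) :
    |(SignType.sign x : R)| ≤ 1 := by
  cases SignType.sign x <;> simp

lemma eq_of_grad_eq_zero {V E : Type*} {src tgt : E → V} (hconn : GConnected src tgt)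
    {h : V → ℝ} (hgrad : grad src tgt h = 0) (v w : V) : h v = h w := by
  induction hconn v w with
  | refl => rfl
  | tail _ hedge ih =>
    obtain ⟨e, ⟨rfl, rfl⟩ | ⟨rfl, rfl⟩⟩ := hedge <;>
    · have he := congrFun hgrad e
      simp only [grad, Pi.zero_apply] at he
      linarith

lemma sum_mul_eq_zero_of_grad_eq_zero {V E : Type*} [Fintype V] {src tgt : E → V}
    (hconn : GConnected src tgt) {ψ h : V → ℝ} (hψ : ∑ v, ψ v = 0)
    (hgrad : grad src tgt h = 0) : ∑ v, ψ v * h v = 0 := by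
  rcases isEmpty_or_nonempty V with _ | ⟨⟨v₀⟩⟩
  · simp
  · simp_rw [eq_of_grad_eq_zero hconn hgrad _ v₀, ← sum_mul, hψ, zero_mul]

lemma sum_abs_grad_smul {V E : Type*} [Fintype E] (src tgt : E → V) (c : ℝ) (h : V → ℝ) :
    ∑ e, |grad src tgt (c • h) e| = |c| * ∑ e, |grad src tgt h e| := by
  simp only [grad, Pi.smul_apply, smul_eq_mul, ← mul_sub, abs_mul, mul_sum]

lemma sum_mul_le_sum_abs_grad {V E : Type*} [Fintype V] [Fintype E] {src tgt : E → V}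
    (hconn : GConnected src tgt) {ψ : V → ℝ} (hψ : ∑ v, ψ v = 0)
    (hdual : ∀ h : V → ℝ, ∑ e, |grad src tgt h e| ≤ 1 → ∑ v, ψ v * h v ≤ 1) (h : V → ℝ) :
    ∑ v, ψ v * h v ≤ ∑ e, |grad src tgt h e| := by
  obtain ht | ht := (sum_nonneg fun e _ => abs_nonneg (grad src tgt h e)).eq_or_lt
  · have hgrad : grad src tgt h = 0 := funext fun e =>
      abs_eq_zero.mp ((sum_eq_zero_iff_of_nonneg fun e _ => abs_nonneg _).mp ht.symm e
        (mem_univ e))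
    exact (sum_mul_eq_zero_of_grad_eq_zero hconn hψ hgrad).trans_le ht.le
  · set t := ∑ e, |grad src tgt h e|
    have hscaled := hdual (t⁻¹ • h) <| by
      rw [sum_abs_grad_smul, abs_of_pos (inv_pos.mpr ht), inv_mul_cancel₀ ht.ne']
    simp only [Pi.smul_apply, smul_eq_mul, mul_left_comm _ t⁻¹, ← mul_sum] at hscaled
    rwa [inv_mul_le_iff₀ ht, mul_one] at hscaled

lemma exists_sum_abs_grad_lt_of_notMem {V E : Type*} [Fintype V] [Fintype E] [DecidableEq V]
    {src tgt : E → V} {ψ : V → ℝ} (hψ : ψ ∉ gdiv src tgt '' {g | ∀ e, |g e| ≤ 1}) :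
    ∃ h : V → ℝ, ∑ e, |grad src tgt h e| < ∑ v, ψ v * h v := by
  have hball : {g : E → ℝ | ∀ e, |g e| ≤ 1} = Metric.closedBall 0 1 := by
    ext g; simp [pi_norm_le_iff_of_nonneg]
  rw [hball] at hψ
  obtain ⟨f, u, hK, hψu⟩ := geometric_hahn_banach_closed_point
    ((convex_closedBall 0 1).linear_image (gdivₗ src tgt))
    ((isCompact_closedBall 0 1).image (gdivₗ src tgt).continuous_of_finiteDimensional).isClosed
    hψ
  set h : V → ℝ := fun v => f fun w => if v = w then 1 else 0
  have hf : ∀ x, f x = ∑ v, x v * h v :=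
    LinearMap.pi_apply_eq_sum_univ (f : (V → ℝ) →ₗ[ℝ] ℝ)
  refine ⟨h, ?_⟩
  have hsign : gdiv src tgt (fun e => SignType.sign (grad src tgt h e)) ∈
      gdivₗ src tgt '' Metric.closedBall 0 1 :=
    ⟨_, by simpa [← hball] using fun e => abs_sign_le_one _, rfl⟩
  calc ∑ e, |grad src tgt h e|
      = f (gdiv src tgt fun e => SignType.sign (grad src tgt h e)) := by
        simp_rw [hf, sum_gdiv_mul, sign_mul_self]
    _ < u := hK _ hsign
    _ < ∑ v, ψ v * h v := hf ψ ▸ hψu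

theorem stmt6 {V E : Type*} [Fintype V] [Fintype E] [DecidableEq V]
    (src tgt : E → V) (hconn : GConnected src tgt) :
    {ψ : V → ℝ | (∑ v : V, ψ v = 0) ∧
        ∀ h : V → ℝ, (∑ e : E, |grad src tgt h e|) ≤ 1 → ∑ v : V, ψ v * h v ≤ 1} =
      {ψ : V → ℝ | ∃ g : E → ℝ, (∀ e : E, |g e| ≤ 1) ∧ gdiv src tgt g = ψ} := by
  ext ψ
  constructor
  · rintro ⟨hψ, hdual⟩
    by_contra hnotMem
    obtain ⟨h, hlt⟩ := exists_sum_abs_grad_lt_of_notMem hnotMem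
    exact hlt.not_ge (sum_mul_le_sum_abs_grad hconn hψ hdual h)
  · rintro ⟨g, hg, rfl⟩
    refine ⟨sum_gdiv src tgt g, fun h hh => ?_⟩
    rw [sum_gdiv_mul]
    exact (sum_mul_le_sum_abs _ hg _).trans hh
end

section
/- Let G = (V,E) be a finite connected directed graph, u₀ ∈ S_V, t > 0, and let ψ̃ be the unique nearest point in ℓ²(S_V) to u₀ within t·div(B_{ℓ∞(S_E)}). Then u_opt := u₀ − ψ̃ is the unique minimizer of the functional u ↦ (1/2)‖u₀ − u‖²_{ℓ²(S_V)} + t‖grad u‖_{ℓ¹(S_E)} over u ∈ S_V, up to addition of constants; in particular its value equals the infimum L_{2,1}(t, u₀). -/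
lemma adjRof {V E : Type*} [Fintype V] [Fintype E] [DecidableEq V]
    (src tgt : E → V) (u : V → ℝ) (g : E → ℝ) :
    ∑ v : V, u v * gdiv src tgt g v = ∑ e : E, g e * grad src tgt u e := by
  unfold gdiv grad
  simp only [mul_sub, Finset.mul_sum, mul_ite, mul_zero]
  rw [Finset.sum_sub_distrib, Finset.sum_comm, Finset.sum_comm (f := fun v e => if src e = v then u v * g e else 0)]
  simp only [Finset.sum_ite_eq, Finset.mem_univ, if_true]
  rw [← Finset.sum_sub_distrib]
  apply Finset.sum_congr rfl; intros; ring

lemma gdiv_linRof {V E : Type*} [Fintype E] [DecidableEq V]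
    (src tgt : E → V) (a b : ℝ) (g1 g2 : E → ℝ) (v : V) :
    gdiv src tgt (fun e => a * g1 e + b * g2 e) v
      = a * gdiv src tgt g1 v + b * gdiv src tgt g2 v := by
  have h : ∀ (P : Prop) [Decidable P] (x y : ℝ),
      (if P then a * x + b * y else 0) = a * (if P then x else 0) + b * (if P then y else 0) := by
    intros P _ x y; split <;> ring
  simp only [gdiv, h, Finset.sum_add_distrib, ← Finset.mul_sum]
  ring

theorem stmt11 {V E : Type*} [Fintype V] [Fintype E] [DecidableEq V]
    (src tgt : E → V) (hconn : GConnected src tgt) (u₀ ψt : V → ℝ) (t : ℝ) (ht : 0 < t)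
    (hmem : ∃ g : E → ℝ, (∀ e : E, |g e| ≤ t) ∧ gdiv src tgt g = ψt)
    (hnear : ∀ ψ : V → ℝ, (∃ g : E → ℝ, (∀ e : E, |g e| ≤ t) ∧ gdiv src tgt g = ψ) →
      ∑ v : V, (u₀ v - ψt v) ^ 2 ≤ ∑ v : V, (u₀ v - ψ v) ^ 2) :
    (∀ u : V → ℝ,
        (1 / 2) * ∑ v : V, (u₀ v - (u₀ v - ψt v)) ^ 2 +
            t * ∑ e : E, |grad src tgt (fun v => u₀ v - ψt v) e| ≤
          (1 / 2) * ∑ v : V, (u₀ v - u v) ^ 2 + t * ∑ e : E, |grad src tgt u e|) ∧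
    (∀ u : V → ℝ,
        (1 / 2) * ∑ v : V, (u₀ v - u v) ^ 2 + t * ∑ e : E, |grad src tgt u e| =
          (1 / 2) * ∑ v : V, (u₀ v - (u₀ v - ψt v)) ^ 2 +
            t * ∑ e : E, |grad src tgt (fun v => u₀ v - ψt v) e| →
        ∃ c : ℝ, ∀ v : V, u v = (u₀ v - ψt v) + c) ∧
    (1 / 2) * ∑ v : V, (u₀ v - (u₀ v - ψt v)) ^ 2 +
        t * ∑ e : E, |grad src tgt (fun v => u₀ v - ψt v) e| =
      sInf {r : ℝ | ∃ u : V → ℝ,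
        r = (1 / 2) * ∑ v : V, (u₀ v - u v) ^ 2 + t * ∑ e : E, |grad src tgt u e|} := by
  set uopt : V → ℝ := fun v => u₀ v - ψt v with huopt
  -- Variational inequality from the projection property
  have hK : ∀ ψ : V → ℝ, (∃ g : E → ℝ, (∀ e : E, |g e| ≤ t) ∧ gdiv src tgt g = ψ) →
      ∑ v : V, uopt v * ψ v ≤ ∑ v : V, uopt v * ψt v := by
    intro ψ hψ
    obtain ⟨g, hg, hdg⟩ := hψ
    obtain ⟨g0, hg0, hdg0⟩ := hmem
    set ip : ℝ := ∑ v : V, uopt v * (ψ v - ψt v) with hip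
    set Nb : ℝ := ∑ v : V, (ψ v - ψt v) ^ 2 with hNb
    have hNb0 : 0 ≤ Nb := Finset.sum_nonneg fun v _ => sq_nonneg _
    -- for each s ∈ (0,1], 2*ip ≤ s*Nb
    have key : ∀ s : ℝ, 0 < s → s ≤ 1 → 2 * ip ≤ s * Nb := by
      intro s hs0 hs1
      have hmemS : ∃ gs : E → ℝ, (∀ e : E, |gs e| ≤ t) ∧
          gdiv src tgt gs = fun v => ψt v + s * (ψ v - ψt v) := by
        refine ⟨fun e => (1 - s) * g0 e + s * g e, ?_, ?_⟩
        · intro e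
          calc |(1 - s) * g0 e + s * g e| ≤ |(1 - s) * g0 e| + |s * g e| := abs_add_le _ _
            _ = (1 - s) * |g0 e| + s * |g e| := by
                rw [abs_mul, abs_mul, abs_of_nonneg (by linarith), abs_of_nonneg hs0.le]
            _ ≤ (1 - s) * t + s * t := by
                have := hg0 e; have := hg e
                have h1 : (1 - s) * |g0 e| ≤ (1 - s) * t :=
                  mul_le_mul_of_nonneg_left (hg0 e) (by linarith)
                have h2 : s * |g e| ≤ s * t := mul_le_mul_of_nonneg_left (hg e) hs0.le
                linarith
            _ = t := by ring
        · funext v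
          rw [gdiv_linRof src tgt (1 - s) s g0 g v, hdg0, hdg]
          ring
      have h1 := hnear _ hmemS
      have hexp : ∑ v : V, (u₀ v - (ψt v + s * (ψ v - ψt v))) ^ 2
          = ∑ v : V, (u₀ v - ψt v) ^ 2 - 2 * s * ip + s ^ 2 * Nb := by
        rw [hip, hNb, Finset.mul_sum, Finset.mul_sum, ← Finset.sum_sub_distrib,
          ← Finset.sum_add_distrib]
        apply Finset.sum_congr rfl; intro v _; simp only [huopt]; ring
      rw [hexp] at h1
      have h2 : 2 * s * ip ≤ s ^ 2 * Nb := by linarith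
      nlinarith
    -- conclude ip ≤ 0
    have hip0 : ip ≤ 0 := by
      by_contra h
      push_neg at h
      have hs : 0 < ip / (Nb + 1) := div_pos h (by linarith)
      have h1 := key (min 1 (ip / (Nb + 1))) (lt_min one_pos hs) (min_le_left _ _)
      have h2 : min 1 (ip / (Nb + 1)) * Nb ≤ (ip / (Nb + 1)) * Nb :=
        mul_le_mul_of_nonneg_right (min_le_right _ _) hNb0
      have h3 : (ip / (Nb + 1)) * Nb ≤ ip := by
        rw [div_mul_eq_mul_div, div_le_iff₀ (by linarith)]
        nlinarith
      linarith
    have : ∑ v : V, uopt v * ψ v - ∑ v : V, uopt v * ψt v = ip := by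
      rw [hip, ← Finset.sum_sub_distrib]
      apply Finset.sum_congr rfl; intro v _; ring
    linarith
  -- dual bound
  have hB : ∀ (u ψ : V → ℝ), (∃ g : E → ℝ, (∀ e : E, |g e| ≤ t) ∧ gdiv src tgt g = ψ) →
      ∑ v : V, u v * ψ v ≤ t * ∑ e : E, |grad src tgt u e| := by
    intro u ψ ⟨g, hg, hdg⟩
    rw [← hdg, adjRof]
    calc ∑ e : E, g e * grad src tgt u e ≤ ∑ e : E, |g e * grad src tgt u e| :=
          Finset.sum_le_sum fun e _ => le_abs_self _
      _ ≤ ∑ e : E, t * |grad src tgt u e| := Finset.sum_le_sum fun e _ => by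
          rw [abs_mul]; exact mul_le_mul_of_nonneg_right (hg e) (abs_nonneg _)
      _ = t * ∑ e : E, |grad src tgt u e| := (Finset.mul_sum _ _ _).symm
  -- attainment at uopt
  have hC : t * ∑ e : E, |grad src tgt uopt e| = ∑ v : V, uopt v * ψt v := by
    refine le_antisymm ?_ (hB uopt ψt hmem)
    set gs : E → ℝ := fun e => if 0 ≤ grad src tgt uopt e then t else -t with hgs
    have hgsmem : ∃ g : E → ℝ, (∀ e : E, |g e| ≤ t) ∧ gdiv src tgt g = gdiv src tgt gs :=
      ⟨gs, fun e => by
        simp only [hgs]; split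
        · rw [abs_of_pos ht]
        · rw [abs_neg, abs_of_pos ht], rfl⟩
    have heq : ∑ v : V, uopt v * gdiv src tgt gs v = t * ∑ e : E, |grad src tgt uopt e| := by
      rw [adjRof, Finset.mul_sum]
      apply Finset.sum_congr rfl
      intro e _
      simp only [hgs]
      rcases le_or_gt 0 (grad src tgt uopt e) with h | h
      · rw [if_pos h, abs_of_nonneg h]
      · rw [if_neg (not_le.mpr h), abs_of_neg h]; ring
    have := hK (gdiv src tgt gs) hgsmem
    linarith
  -- pointwise algebraic identity summed
  have comb : ∀ u : V → ℝ,
      (1 / 2) * ∑ v : V, (u₀ v - u v) ^ 2 + ∑ v : V, u v * ψt v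
        = (1 / 2) * ∑ v : V, ψt v ^ 2 + ∑ v : V, uopt v * ψt v
          + (1 / 2) * ∑ v : V, (u₀ v - u v - ψt v) ^ 2 := by
    intro u
    simp only [Finset.mul_sum, ← Finset.sum_add_distrib]
    apply Finset.sum_congr rfl; intro v _; simp only [huopt]; ring
  have hfix : ∑ v : V, (u₀ v - (u₀ v - ψt v)) ^ 2 = ∑ v : V, ψt v ^ 2 :=
    Finset.sum_congr rfl fun v _ => by ring
  -- part 1
  have part1 : ∀ u : V → ℝ,
      (1 / 2) * ∑ v : V, (u₀ v - (u₀ v - ψt v)) ^ 2 +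
          t * ∑ e : E, |grad src tgt (fun v => u₀ v - ψt v) e| ≤
        (1 / 2) * ∑ v : V, (u₀ v - u v) ^ 2 + t * ∑ e : E, |grad src tgt u e| := by
    intro u
    have h1 := hB u ψt hmem
    have h2 := comb u
    have h3 : (0:ℝ) ≤ ∑ v : V, (u₀ v - u v - ψt v) ^ 2 :=
      Finset.sum_nonneg fun v _ => sq_nonneg _
    rw [hfix]
    have hC' : t * ∑ e : E, |grad src tgt (fun v => u₀ v - ψt v) e|
        = ∑ v : V, uopt v * ψt v := hC
    linarith
  refine ⟨part1, ?_, ?_⟩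
  · -- part 2 : uniqueness (in fact c = 0)
    intro u hu
    refine ⟨0, fun v => ?_⟩
    have h1 := hB u ψt hmem
    have h2 := comb u
    have hC' : t * ∑ e : E, |grad src tgt (fun v => u₀ v - ψt v) e|
        = ∑ v : V, uopt v * ψt v := hC
    rw [hfix] at hu
    have h4 : ∑ v : V, (u₀ v - u v - ψt v) ^ 2 ≤ 0 := by linarith
    have h5 : ∑ v : V, (u₀ v - u v - ψt v) ^ 2 = 0 :=
      le_antisymm h4 (Finset.sum_nonneg fun v _ => sq_nonneg _)
    have h6 := (Finset.sum_eq_zero_iff_of_nonneg (fun v _ => sq_nonneg (u₀ v - u v - ψt v))).mp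
      h5 v (Finset.mem_univ v)
    have h7 : u₀ v - u v - ψt v = 0 := by
      exact pow_eq_zero_iff (by norm_num) |>.mp h6
    linarith
  · -- part 3 : equals infimum
    refine le_antisymm ?_ ?_
    · refine le_csInf ⟨_, fun v => u₀ v - ψt v, rfl⟩ ?_
      rintro r ⟨u, rfl⟩
      exact part1 u
    · exact csInf_le ⟨_, by rintro r ⟨u, rfl⟩; exact part1 u⟩ ⟨fun v => u₀ v - ψt v, rfl⟩
end

section
/- With the same notation, if g ∈ t·B_{ℓ∞(S_E)} satisfies div g ≠ ψ̃, then ‖u₀ − div(Tg)‖_{ℓ²(S_V)} < ‖u₀ − div g‖_{ℓ²(S_V)} (strict decrease). -/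
/-- Projection (clamp) of `x` onto the interval `[-t, t]`. -/
noncomputable def clamp (t x : ℝ) : ℝ := max (-t) (min t x)

/-- Divergence ignoring the flow on the edge `k`. -/
def divWo {V E : Type*} [Fintype E] [DecidableEq V] (src tgt : E → V) (k : E)
    (g : E → ℝ) : V → ℝ :=
  fun v => gdiv src tgt g v + (if src k = v then g k else 0) - (if tgt k = v then g k else 0)

/-- The optimal new value for the flow on the edge `k` before clamping. -/
noncomputable def Kg {V E : Type*} [Fintype E] [DecidableEq V] (src tgt : E → V) (u₀ : V → ℝ)
    (g : E → ℝ) (k : E) : ℝ :=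
  ((u₀ (tgt k) - divWo src tgt k g (tgt k)) - (u₀ (src k) - divWo src tgt k g (src k))) / 2

/-- The single-edge coordinate-descent update operator `T_k`. -/
noncomputable def Tk {V E : Type*} [Fintype E] [DecidableEq V] [DecidableEq E]
    (src tgt : E → V) (u₀ : V → ℝ) (t : ℝ) (k : E) (g : E → ℝ) : E → ℝ :=
  Function.update g k (clamp t (Kg src tgt u₀ g k))

/-! Each `T_k` minimises the energy `‖u₀ - div g‖²` over the box exactly in the coordinate `g k`:
for a non-loop edge the energy is a quadratic in `g k` with leading coefficient `2` and vertex
`Kg`, and clamping is the projection onto `[-t, t]`. Hence no step increases the energy, and a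
sweep that does not decrease it consists of trivial steps, so `g` is optimal in every coordinate:
with `r = u₀ - div g`, `(y - g e) * (r (tgt e) - r (src e)) ≤ 0` for all `|y| ≤ t`. Since `div` is
minus the adjoint of `grad`, summing these inequalities gives `⟪r, div h - div g⟫ ≤ 0` for every
feasible `h`, so `div g` is the nearest point `ψ̃`. -/

open Finset

section Graph

variable {V E : Type*} [DecidableEq V] (src tgt : E → V)

lemma gdiv_add [Fintype E] (g h : E → ℝ) :
    gdiv src tgt (g + h) = gdiv src tgt g + gdiv src tgt h := by
  funext v
  simp only [gdiv, Pi.add_apply, ite_add_zero, sum_add_distrib]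
  ring

lemma gdiv_sub [Fintype E] (g h : E → ℝ) :
    gdiv src tgt (g - h) = gdiv src tgt g - gdiv src tgt h := by
  rw [eq_sub_iff_add_eq, ← gdiv_add, sub_add_cancel]

lemma gdiv_single [Fintype E] [DecidableEq E] (k : E) (a : ℝ) (v : V) :
    gdiv src tgt (Pi.single k a) v =
      (if tgt k = v then a else 0) - (if src k = v then a else 0) := by
  simp only [gdiv]
  congr 1 <;> rw [Fintype.sum_eq_single k fun e he => by simp [he]] <;> simp

lemma sum_mul_gdiv [Fintype V] [Fintype E] (r : V → ℝ) (h : E → ℝ) :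
    ∑ v, r v * gdiv src tgt h v = ∑ e, h e * grad src tgt r e := by
  simp only [gdiv, grad, mul_sub, mul_sum, mul_ite, mul_zero, sum_sub_distrib]
  rw [sum_comm, sum_comm (γ := V)]
  simp only [sum_ite_eq, mem_univ, if_true]
  congr 1 <;> exact sum_congr rfl fun e _ => mul_comm _ _

end Graph

section SqDist

variable {V : Type*} [Fintype V]

def sqDist (u w : V → ℝ) : ℝ := ∑ v, (u v - w v) ^ 2

lemma sqDist_add_le_of_sum_mul_nonpos {u w φ : V → ℝ}
    (h : ∑ v, (u v - φ v) * (w v - φ v) ≤ 0) : sqDist u φ + sqDist w φ ≤ sqDist u w := by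
  have hexpand : sqDist u w = sqDist u φ + sqDist w φ - 2 * ∑ v, (u v - φ v) * (w v - φ v) := by
    simp only [sqDist, mul_sum, ← sum_add_distrib, ← sum_sub_distrib]
    exact sum_congr rfl fun v _ => by ring
  linarith

lemma eq_of_sqDist_nonpos {u w : V → ℝ} (h : sqDist u w ≤ 0) : u = w := by
  have hzero := (sum_eq_zero_iff_of_nonneg fun v _ => sq_nonneg (u v - w v)).mp
    (h.antisymm (sum_nonneg fun v _ => sq_nonneg _))
  funext v
  simpa [sub_eq_zero] using hzero v (mem_univ v)

end SqDist

section Clamp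

variable {t : ℝ}

lemma abs_clamp_le (ht : 0 ≤ t) (x : ℝ) : |clamp t x| ≤ t :=
  abs_le.mpr ⟨le_max_left _ _, max_le (by linarith) (min_le_left _ _)⟩

lemma sub_clamp_mul_sub_clamp_nonpos {y : ℝ} (hy : |y| ≤ t) (x : ℝ) :
    (y - clamp t x) * (x - clamp t x) ≤ 0 := by
  obtain ⟨hy₁, hy₂⟩ := abs_le.mp hy
  unfold clamp
  rcases le_total x (-t) with hx | hx
  · rw [min_eq_right (by linarith), max_eq_left hx]; nlinarith
  rcases le_total t x with hx' | hx'
  · rw [min_eq_left hx', max_eq_right (by linarith)]; nlinarith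
  · rw [min_eq_right hx', max_eq_right hx]; simp

end Clamp

lemma update_eq_add_single {E : Type*} [DecidableEq E] (g : E → ℝ) (k : E) (s : ℝ) :
    Function.update g k s = g + Pi.single k (s - g k) := by
  rw [Pi.update_eq_sub_add_single, Pi.single_sub]
  abel

section CoordinateDescent

variable {V E : Type*} [Fintype E] [DecidableEq V] (src tgt : E → V) (u₀ : V → ℝ)

lemma sqDist_gdiv_update [Fintype V] [DecidableEq E] {k : E} (hk : src k ≠ tgt k) (g : E → ℝ)
    (s : ℝ) :
    sqDist u₀ (gdiv src tgt (Function.update g k s)) =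
      sqDist u₀ (gdiv src tgt g) - 2 * (s - g k) * grad src tgt (u₀ - gdiv src tgt g) k
        + 2 * (s - g k) ^ 2 := by
  set d := gdiv src tgt (Pi.single k (s - g k))
  have hcross : ∑ v, (u₀ - gdiv src tgt g) v * d v =
      (s - g k) * grad src tgt (u₀ - gdiv src tgt g) k := by
    rw [sum_mul_gdiv, Fintype.sum_eq_single k fun e he => by simp [he]]
    simp
  have hsq : ∑ v, d v * d v = 2 * (s - g k) ^ 2 := by
    rw [sum_mul_gdiv, Fintype.sum_eq_single k fun e he => by simp [he]]
    simp [d, grad, gdiv_single, hk, Ne.symm hk]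
    ring
  have hexpand : sqDist u₀ (gdiv src tgt (Function.update g k s)) =
      sqDist u₀ (gdiv src tgt g) - 2 * ∑ v, (u₀ - gdiv src tgt g) v * d v + ∑ v, d v * d v := by
    simp only [sqDist, update_eq_add_single, gdiv_add, mul_sum, ← sum_add_distrib,
      ← sum_sub_distrib]
    exact sum_congr rfl fun v _ => by simp only [Pi.add_apply, Pi.sub_apply, d]; ring
  rw [hexpand, hcross, hsq]
  ring

lemma Kg_eq {k : E} (hk : src k ≠ tgt k) (g : E → ℝ) :
    Kg src tgt u₀ g k = g k + grad src tgt (u₀ - gdiv src tgt g) k / 2 := by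
  simp only [Kg, divWo, grad, Pi.sub_apply, if_neg hk, if_neg (Ne.symm hk), ↓reduceIte]
  ring

lemma gdiv_update_of_loop [DecidableEq E] {k : E} (hk : src k = tgt k) (g : E → ℝ) (s : ℝ) :
    gdiv src tgt (Function.update g k s) = gdiv src tgt g := by
  funext v
  simp [update_eq_add_single, gdiv_add, gdiv_single, hk]

def IsStationaryAt (t : ℝ) (g : E → ℝ) (e : E) : Prop :=
  ∀ y, |y| ≤ t → (y - g e) * grad src tgt (u₀ - gdiv src tgt g) e ≤ 0

lemma isStationaryAt_congr {t : ℝ} {g h : E → ℝ} {e : E} (hdiv : gdiv src tgt h = gdiv src tgt g)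
    (he : h e = g e) : IsStationaryAt src tgt u₀ t h e ↔ IsStationaryAt src tgt u₀ t g e := by
  simp only [IsStationaryAt, hdiv, he]

lemma abs_Tk_le [DecidableEq E] {t : ℝ} (ht : 0 ≤ t) (k : E) {g : E → ℝ} (hg : ∀ e, |g e| ≤ t)
    (e : E) :
    |Tk src tgt u₀ t k g e| ≤ t := by
  rcases eq_or_ne e k with rfl | he
  · simpa [Tk] using abs_clamp_le ht _
  · simpa [Tk, he] using hg e

lemma sqDist_Tk_add_le [Fintype V] [DecidableEq E] {t : ℝ} {k : E} (hk : src k ≠ tgt k)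
    {g : E → ℝ} (hg : |g k| ≤ t) :
    sqDist u₀ (gdiv src tgt (Tk src tgt u₀ t k g)) + 2 * (clamp t (Kg src tgt u₀ g k) - g k) ^ 2
      ≤ sqDist u₀ (gdiv src tgt g) := by
  have hproj := sub_clamp_mul_sub_clamp_nonpos hg (Kg src tgt u₀ g k)
  rw [Tk, sqDist_gdiv_update src tgt u₀ hk]
  rw [Kg_eq src tgt u₀ hk] at hproj ⊢
  -- with `c = clamp t (Kg …)`, the claim reduces to `hproj`: `(g k - c) * (Kg … - c) ≤ 0`
  nlinarith

lemma Tk_step [Fintype V] [DecidableEq E] {t : ℝ} (k : E) {g : E → ℝ} (hg : |g k| ≤ t) :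
    sqDist u₀ (gdiv src tgt (Tk src tgt u₀ t k g)) ≤ sqDist u₀ (gdiv src tgt g) ∧
      (sqDist u₀ (gdiv src tgt (Tk src tgt u₀ t k g)) = sqDist u₀ (gdiv src tgt g) →
        gdiv src tgt (Tk src tgt u₀ t k g) = gdiv src tgt g ∧ IsStationaryAt src tgt u₀ t g k) := by
  by_cases hk : src k = tgt k
  · have hdiv := gdiv_update_of_loop src tgt hk g (clamp t (Kg src tgt u₀ g k))
    refine ⟨(congrArg _ hdiv).le, fun _ => ⟨hdiv, fun y _ => ?_⟩⟩
    simp [grad, hk]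
  have hdesc := sqDist_Tk_add_le src tgt u₀ hk hg
  refine ⟨(le_add_of_nonneg_right (by positivity)).trans hdesc, fun heq => ?_⟩
  have hfix : clamp t (Kg src tgt u₀ g k) = g k := by nlinarith
  refine ⟨by rw [Tk, hfix, Function.update_eq_self], fun y hy => ?_⟩
  have hproj := sub_clamp_mul_sub_clamp_nonpos hy (Kg src tgt u₀ g k)
  rw [hfix, Kg_eq src tgt u₀ hk] at hproj
  nlinarith

lemma sqDist_add_le_of_isStationaryAt [Fintype V] {t : ℝ} {g h : E → ℝ}
    (hstat : ∀ e, IsStationaryAt src tgt u₀ t g e) (hh : ∀ e, |h e| ≤ t) :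
    sqDist u₀ (gdiv src tgt g) + sqDist (gdiv src tgt h) (gdiv src tgt g)
      ≤ sqDist u₀ (gdiv src tgt h) := by
  refine sqDist_add_le_of_sum_mul_nonpos ?_
  calc ∑ v, (u₀ v - gdiv src tgt g v) * (gdiv src tgt h v - gdiv src tgt g v)
      = ∑ v, (u₀ - gdiv src tgt g) v * gdiv src tgt (h - g) v := by simp [gdiv_sub]
    _ = ∑ e, (h - g) e * grad src tgt (u₀ - gdiv src tgt g) e := sum_mul_gdiv src tgt _ _
    _ ≤ 0 := sum_nonpos fun e _ => hstat e (h e) (hh e)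

end CoordinateDescent

section Sweep

variable {V E : Type*} [Fintype V] [Fintype E] [DecidableEq V] [DecidableEq E]
  (src tgt : E → V) (u₀ : V → ℝ)

noncomputable def sweep (t : ℝ) (L : List E) (g : E → ℝ) : E → ℝ :=
  L.foldl (fun h k => Tk src tgt u₀ t k h) g

lemma sqDist_sweep_le {t : ℝ} (ht : 0 ≤ t) (L : List E) {g : E → ℝ} (hg : ∀ e, |g e| ≤ t) :
    sqDist u₀ (gdiv src tgt (sweep src tgt u₀ t L g)) ≤ sqDist u₀ (gdiv src tgt g) ∧
      (sqDist u₀ (gdiv src tgt (sweep src tgt u₀ t L g)) = sqDist u₀ (gdiv src tgt g) →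
        ∀ e ∈ L, IsStationaryAt src tgt u₀ t g e) := by
  induction L generalizing g with
  | nil => exact ⟨le_rfl, by simp⟩
  | cons k L ih =>
    obtain ⟨hle₁, heq₁⟩ := Tk_step src tgt u₀ k (hg k)
    obtain ⟨hle, heq⟩ := ih (abs_Tk_le src tgt u₀ ht k hg)
    refine ⟨hle.trans hle₁, fun hsweep => ?_⟩
    have hstep : sqDist u₀ (gdiv src tgt (Tk src tgt u₀ t k g)) = sqDist u₀ (gdiv src tgt g) :=
      hle₁.antisymm (hsweep ▸ hle)
    obtain ⟨hdiv, hk⟩ := heq₁ hstep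
    have hrest := heq (hsweep.trans hstep.symm)
    intro e he
    rcases eq_or_ne e k with rfl | hek
    · exact hk
    · exact (isStationaryAt_congr src tgt u₀ hdiv (Function.update_of_ne hek _ _)).mp
        (hrest e (List.mem_of_ne_of_mem hek he))

end Sweep

theorem stmt14_general {V E : Type*} [Fintype V] [Fintype E] [DecidableEq V] [DecidableEq E]
    (src tgt : E → V) (u₀ : V → ℝ) (t : ℝ) (ht : 0 < t)
    (L : List E) (hcov : ∀ e : E, e ∈ L) (ψt : V → ℝ)
    (hmem : ∃ g : E → ℝ, (∀ e : E, |g e| ≤ t) ∧ gdiv src tgt g = ψt)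
    (hnear : ∀ ψ : V → ℝ, (∃ g : E → ℝ, (∀ e : E, |g e| ≤ t) ∧ gdiv src tgt g = ψ) →
      ∑ v : V, (u₀ v - ψt v) ^ 2 ≤ ∑ v : V, (u₀ v - ψ v) ^ 2)
    (g : E → ℝ) (hg : ∀ e : E, |g e| ≤ t) (hne : gdiv src tgt g ≠ ψt) :
    ∑ v : V, (u₀ v - gdiv src tgt (L.foldl (fun h k => Tk src tgt u₀ t k h) g) v) ^ 2 <
      ∑ v : V, (u₀ v - gdiv src tgt g v) ^ 2 := by
  obtain ⟨hle, hstat⟩ := sqDist_sweep_le src tgt u₀ ht.le L hg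
  refine lt_of_le_of_ne hle fun hsweep => hne ?_
  obtain ⟨gψ, hgψ, rfl⟩ := hmem
  have hopt := sqDist_add_le_of_isStationaryAt src tgt u₀ (fun e => hstat hsweep e (hcov e)) hgψ
  have hψ : sqDist u₀ (gdiv src tgt gψ) ≤ sqDist u₀ (gdiv src tgt g) := hnear _ ⟨g, hg, rfl⟩
  exact (eq_of_sqDist_nonpos (by linarith)).symm

theorem stmt14 {V E : Type*} [Fintype V] [Fintype E] [DecidableEq V] [DecidableEq E]
    (src tgt : E → V) (hconn : GConnected src tgt) (u₀ : V → ℝ) (t : ℝ) (ht : 0 < t)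
    (L : List E) (hnd : L.Nodup) (hcov : ∀ e : E, e ∈ L) (ψt : V → ℝ)
    (hmem : ∃ g : E → ℝ, (∀ e : E, |g e| ≤ t) ∧ gdiv src tgt g = ψt)
    (hnear : ∀ ψ : V → ℝ, (∃ g : E → ℝ, (∀ e : E, |g e| ≤ t) ∧ gdiv src tgt g = ψ) →
      ∑ v : V, (u₀ v - ψt v) ^ 2 ≤ ∑ v : V, (u₀ v - ψ v) ^ 2)
    (g : E → ℝ) (hg : ∀ e : E, |g e| ≤ t) (hne : gdiv src tgt g ≠ ψt) :
    ∑ v : V, (u₀ v - gdiv src tgt (L.foldl (fun h k => Tk src tgt u₀ t k h) g) v) ^ 2 <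
      ∑ v : V, (u₀ v - gdiv src tgt g v) ^ 2 :=
  stmt14_general src tgt u₀ t ht L hcov ψt hmem hnear g hg hne
end
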